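/- Let p : E → B be a fibration, Σ a normal cleavage of p and s : E^p → E the good map corresponding to Σ under the bijection between normal cleavages and good maps. Then Σ is closed if and only if s is very good, i.e. s carries the closed cleavage Σ^p of E^p (consisting of the arrows of E^p whose first coordinate is an identity) into Σ. -/

import Mathlib

open CategoryTheory Simplicial Opposite

namespace DelHoyo

universe w
variable {E B : Type} [SmallCategory E] [SmallCategory B]

/-- An arrow `f : e ⟶ e'` is *cartesian* for `p : E ⥤ B` (in the covariant, cofibred-category
convention of the paper): every `g : e ⟶ e''` lying over `p f` factors uniquely through `f`
by an arrow lying over the identity of `p e'`. -/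
def IsCartArrow (p : E ⥤ B) {e e' : E} (f : e ⟶ e') : Prop :=
  ∀ ⦃e'' : E⦄ (g : e ⟶ e'') (w : p.obj e' = p.obj e''),
    p.map g = p.map f ≫ eqToHom w →
    ∃! h : e' ⟶ e'', p.map h = eqToHom w ∧ f ≫ h = g

/-- `p` is a prefibration: over every arrow `φ` with source `p e` there is a cartesian arrow
with source `e`. -/
def IsPrefibration (p : E ⥤ B) : Prop :=
  ∀ (e : E) (b : B) (φ : p.obj e ⟶ b),
    ∃ (e' : E) (f : e ⟶ e') (w : p.obj e' = b),
      IsCartArrow p f ∧ p.map f ≫ eqToHom w = φ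

/-- `p` is a (Grothendieck, covariant) fibration: a prefibration in which cartesian arrows are
closed under composition. -/
def IsFibration (p : E ⥤ B) : Prop :=
  IsPrefibration p ∧
    ∀ ⦃e e' e'' : E⦄ (f : e ⟶ e') (g : e' ⟶ e''),
      IsCartArrow p f → IsCartArrow p g → IsCartArrow p (f ≫ g)

/-- A cleavage: a set of cartesian arrows containing exactly one arrow with domain `e`
over each arrow `φ : p e ⟶ b`. -/
structure Cleavage (p : E ⥤ B) where
  σ : ∀ ⦃e e' : E⦄, (e ⟶ e') → Prop
  cart : ∀ ⦃e e' : E⦄ (f : e ⟶ e'), σ f → IsCartArrow p f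
  lift : ∀ (e : E) (b : B) (φ : p.obj e ⟶ b),
      ∃ (e' : E) (f : e ⟶ e') (w : p.obj e' = b), σ f ∧ p.map f ≫ eqToHom w = φ
  uniq : ∀ ⦃e e₁ e₂ : E⦄ (f : e ⟶ e₁) (g : e ⟶ e₂) (w : p.obj e₁ = p.obj e₂),
      σ f → σ g → p.map f ≫ eqToHom w = p.map g →
      ∃ h : e₁ = e₂, f ≫ eqToHom h = g

/-- A cleavage is normal if it contains the identities. -/
def Cleavage.IsNormal {p : E ⥤ B} (S : Cleavage p) : Prop := ∀ e : E, S.σ (𝟙 e)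

/-- A cleavage is closed if it is closed under composition. -/
def Cleavage.IsClosed {p : E ⥤ B} (S : Cleavage p) : Prop :=
  ∀ ⦃e e' e'' : E⦄ (f : e ⟶ e') (g : e' ⟶ e''), S.σ f → S.σ g → S.σ (f ≫ g)

/-! ### Weak equivalences -/

/-- A continuous map (in `TopCat`) is a homotopy equivalence. -/
def IsHtpyEquivT {X Y : TopCat} (f : X ⟶ Y) : Prop :=
  ∃ g : Y ⟶ X, ContinuousMap.Homotopic (g.hom.comp f.hom) (ContinuousMap.id X) ∧
                 ContinuousMap.Homotopic (f.hom.comp g.hom) (ContinuousMap.id Y)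

/-- A map of simplicial sets is a weak equivalence if its geometric realization is a
homotopy equivalence. -/
noncomputable def SSetWE {X Y : SSet} (f : X ⟶ Y) : Prop := IsHtpyEquivT (SSet.toTop.map f)

/-- The map of nerves induced by a functor. -/
def nerveMap {C D : Type} [SmallCategory C] [SmallCategory D] (F : C ⥤ D) :
    nerve C ⟶ nerve D where
  app _ := TypeCat.ofHom fun x => x ⋙ F
  naturality _ _ _ := rfl

/-- A functor between small categories is a weak equivalence if the induced map of
classifying spaces is a homotopy equivalence. -/
noncomputable def WEqF {C D : Type} [SmallCategory C] [SmallCategory D] (F : C ⥤ D) : Prop :=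
  SSetWE (nerveMap F)

/-! ### Fibers -/

/-- The fiber of `p : E ⥤ B` over `b`: objects over `b`, arrows over `𝟙 b`. -/
structure FibObj (p : E ⥤ B) (b : B) where
  obj : E
  over' : p.obj obj = b

instance fibCategory (p : E ⥤ B) (b : B) : SmallCategory (FibObj p b) where
  Hom X Y := { f : X.obj ⟶ Y.obj // p.map f = eqToHom (X.over'.trans Y.over'.symm) }
  id X := ⟨𝟙 X.obj, by simp⟩
  comp f g := ⟨f.1 ≫ g.1, by rw [Functor.map_comp, f.2, g.2, eqToHom_trans]⟩
  id_comp f := Subtype.ext (Category.id_comp f.1)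
  comp_id f := Subtype.ext (Category.comp_id f.1)
  assoc f g h := Subtype.ext (Category.assoc f.1 g.1 h.1)

/-- The functor induced on fibers by a functor over `B`. -/
def fibMap {E' : Type} [SmallCategory E'] {p : E ⥤ B} {p' : E' ⥤ B}
    (s : E ⥤ E') (hs : s ⋙ p' = p) (b : B) : FibObj p b ⥤ FibObj p' b where
  obj X := ⟨s.obj X.obj, (Functor.congr_obj hs X.obj).trans X.over'⟩
  map {X Y} f := ⟨s.map f.1, by
    have h := Functor.congr_hom hs f.1
    simp only [Functor.comp_map] at h
    rw [h, f.2, eqToHom_trans, eqToHom_trans]⟩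
  map_id X := Subtype.ext (s.map_id X.obj)
  map_comp f g := Subtype.ext (s.map_comp f.1 g.1)

/-! ### The mapping category `E^u` -/

/-- The mapping category `E^u` of a functor `u : A ⟶ B`. -/
structure MapCat {A : Type} [SmallCategory A] (u : A ⥤ B) where
  pt : A
  base : B
  hom : u.obj pt ⟶ base

/-- Morphisms in the mapping category. -/
@[ext] structure MapCatHom {A : Type} [SmallCategory A] {u : A ⥤ B} (X Y : MapCat u) where
  f : X.pt ⟶ Y.pt
  g : X.base ⟶ Y.base
  w : X.hom ≫ g = u.map f ≫ Y.hom

instance mapCatCategory {A : Type} [SmallCategory A] (u : A ⥤ B) :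
    SmallCategory (MapCat u) where
  Hom := MapCatHom
  id X := ⟨𝟙 _, 𝟙 _, by simp⟩
  comp F G := ⟨F.f ≫ G.f, F.g ≫ G.g, by
    rw [← Category.assoc, F.w, Category.assoc, G.w, Functor.map_comp, Category.assoc]⟩
  id_comp F := by apply MapCatHom.ext <;> simp
  comp_id F := by apply MapCatHom.ext <;> simp
  assoc F G H := by apply MapCatHom.ext <;> simp

/-- The canonical inclusion `i : A ⥤ E^u`. -/
def MapCat.incl {A : Type} [SmallCategory A] (u : A ⥤ B) : A ⥤ MapCat u where
  obj a := ⟨a, u.obj a, 𝟙 _⟩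
  map f := ⟨f, u.map f, by simp⟩
  map_id a := MapCatHom.ext rfl (u.map_id a)
  map_comp f g := MapCatHom.ext rfl (u.map_comp f g)

/-- The projection `π : E^u ⥤ B`. -/
def MapCat.proj {A : Type} [SmallCategory A] (u : A ⥤ B) : MapCat u ⥤ B where
  obj X := X.base
  map F := F.g
  map_id _ := rfl
  map_comp _ _ := rfl

/-- The retraction `r : E^u ⥤ A`. -/
def MapCat.retr {A : Type} [SmallCategory A] (u : A ⥤ B) : MapCat u ⥤ A where
  obj X := X.pt
  map F := F.f
  map_id _ := rfl
  map_comp _ _ := rfl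

/-- A *good* map for a fibration `p`: a retraction for `i : E ⥤ E^p` commuting with the
projections to `B` and preserving cartesian arrows. -/
structure GoodMap (p : E ⥤ B) where
  s : MapCat p ⥤ E
  retr : MapCat.incl p ⋙ s = 𝟭 E
  over' : s ⋙ p = MapCat.proj p
  cart : ∀ ⦃X Y : MapCat p⦄ (f : X ⟶ Y),
    IsCartArrow (MapCat.proj p) f → IsCartArrow p (s.map f)

/-- The arrow `(id_e, φ) : (e, id) ⟶ (e, φ)` of `E^u`; these arrows form the canonical
closed cleavage `Σ^u` of `E^u`. -/
def clArrow {A : Type} [SmallCategory A] (u : A ⥤ B) (e : A) {b : B} (φ : u.obj e ⟶ b) :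
    (MapCat.incl u).obj e ⟶ (MapCat.mk e b φ) :=
  ⟨𝟙 e, φ, by
    show 𝟙 (u.obj e) ≫ φ = u.map (𝟙 e) ≫ φ
    simp⟩

/-- The arrow `s(id_e, φ)` of `E`, seen as an arrow with domain `e`. -/
def GoodMap.clv {p : E ⥤ B} (s : GoodMap p) (e : E) {b : B} (φ : p.obj e ⟶ b) :
    e ⟶ s.s.obj (MapCat.mk e b φ) :=
  eqToHom (Functor.congr_obj s.retr e).symm ≫ s.s.map (clArrow p e φ)

/-- Membership in the canonical cleavage `Σ^u` of `E^u`: the first coordinate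
is an identity. -/
def inSigmaU {A : Type} [SmallCategory A] {u : A ⥤ B} {X Y : MapCat u} (g : X ⟶ Y) : Prop :=
  ∃ h : X.pt = Y.pt, g.f = eqToHom h

/-- Normal cleavages, as a type. -/
def NormalCleavage (p : E ⥤ B) := { S : Cleavage p // S.IsNormal }

end DelHoyo

/-!
A closed cleavage `Σ` can be cancelled on the left: if `a` and `a ≫ h` lie in `Σ`, so does `h`.
Let `k ∈ Σ` lie over `p h`; then `a ≫ k ∈ Σ`, so `a ≫ k` and `a ≫ h` agree up to the
identification of their targets, and since `k` and `a ≫ k` are both cartesian, `k` and `h` agree.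
Applied to `s(id_e, φ) ∈ Σ` and `s(id_e, φ) ≫ s(id_e, ψ) = s(id_e, φ ≫ ψ) ∈ Σ`, this shows that
`s` carries `Σ^p` into `Σ`. Conversely, by uniqueness of cleavage arrows, composable `f, g ∈ Σ` are
`s(id_e, p f)` and `s(id_e, p f) ⟶ s(id_e, p f ≫ p g)` up to such identifications, and their
composite is `s(id_e, p f ≫ p g) ∈ Σ`.
-/

namespace DelHoyo

variable {E B : Type} [SmallCategory E] [SmallCategory B] {p : E ⥤ B}

theorem IsCartArrow.cancel_left {e x y z : E} {m : e ⟶ x} {k : x ⟶ y}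
    (hk : IsCartArrow p k) (hmk : IsCartArrow p (m ≫ k)) {h₁ h₂ : x ⟶ z}
    (w : p.obj y = p.obj z) (hh₁ : p.map h₁ = p.map k ≫ eqToHom w)
    (hh₂ : p.map h₂ = p.map k ≫ eqToHom w) (hm : m ≫ h₁ = m ≫ h₂) : h₁ = h₂ := by
  obtain ⟨t₁, ⟨ht₁, rfl⟩, -⟩ := hk h₁ w hh₁
  obtain ⟨t₂, ⟨ht₂, rfl⟩, -⟩ := hk h₂ w hh₂
  obtain ⟨t, -, ht⟩ := hmk (m ≫ k ≫ t₁) w (by simp [ht₁])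
  rw [ht t₁ ⟨ht₁, by simp⟩, ht t₂ ⟨ht₂, by simpa using hm.symm⟩]

namespace Cleavage

variable (S : Cleavage p)

theorem σ_comp_eqToHom {e e' e'' : E} {f : e ⟶ e'} (hf : S.σ f) (h : e' = e'') :
    S.σ (f ≫ eqToHom h) := by
  subst h
  simpa using hf

theorem σ_eqToHom_comp {e e' e'' : E} (h : e = e') {f : e' ⟶ e''} (hf : S.σ f) :
    S.σ (eqToHom h ≫ f) := by
  subst h
  simpa using hf

variable {S}

theorem IsClosed.σ_of_σ_comp (hS : S.IsClosed) {e x y : E} {a : e ⟶ x} {h : x ⟶ y}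
    (ha : S.σ a) (hah : S.σ (a ≫ h)) : S.σ h := by
  obtain ⟨z, k, w, hk, hkh⟩ := S.lift x (p.obj y) (p.map h)
  have hak : S.σ (a ≫ k) := hS a k ha hk
  obtain ⟨hz, hak_eq⟩ := S.uniq (a ≫ k) (a ≫ h) w hak hah (by simp [hkh])
  have hkh_eq : k ≫ eqToHom hz = h :=
    IsCartArrow.cancel_left (S.cart k hk) (S.cart _ hak) w (by simp [eqToHom_map]) hkh.symm
      (by simpa using hak_eq)
  exact hkh_eq ▸ S.σ_comp_eqToHom hk hz

end Cleavage

def MapCat.postcomp {A : Type} [SmallCategory A] (u : A ⥤ B) (e : A) {b b' : B}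
    (φ : u.obj e ⟶ b) (ψ : b ⟶ b') : MapCat.mk e b φ ⟶ MapCat.mk e b' (φ ≫ ψ) :=
  ⟨𝟙 e, ψ, by simp⟩

theorem clArrow_comp {A : Type} [SmallCategory A] {u : A ⥤ B} {e : A} {b b' : B}
    {φ : u.obj e ⟶ b} {φ' : u.obj e ⟶ b'} (g : MapCat.mk e b φ ⟶ MapCat.mk e b' φ')
    (hg : g.f = 𝟙 e) : clArrow u e φ ≫ g = clArrow u e φ' := by
  have hw := g.w
  dsimp at hw
  rw [hg, u.map_id, Category.id_comp] at hw
  refine MapCatHom.ext ?_ hw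
  show 𝟙 e ≫ g.f = 𝟙 e
  rw [hg, Category.comp_id]

namespace GoodMap

variable (s : GoodMap p)

theorem p_obj_obj (X : MapCat p) : p.obj (s.s.obj X) = X.base :=
  Functor.congr_obj s.over' X

theorem p_map_map {X Y : MapCat p} (g : X ⟶ Y) :
    p.map (s.s.map g) = eqToHom (s.p_obj_obj X) ≫ g.g ≫ eqToHom (s.p_obj_obj Y).symm := by
  simpa [MapCat.proj] using Functor.congr_hom s.over' g

theorem p_map_clv_comp_eqToHom (e : E) {b : B} (φ : p.obj e ⟶ b) :
    p.map (s.clv e φ) ≫ eqToHom (s.p_obj_obj (MapCat.mk e b φ)) = φ := by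
  rw [clv, p.map_comp, eqToHom_map, p_map_map, eqToHom_trans_assoc]
  simp only [Category.assoc, eqToHom_trans, eqToHom_refl, Category.comp_id]
  exact Category.id_comp φ -- the remaining `eqToHom` relates definitionally equal objects

theorem clv_comp_map {e : E} {b b' : B} {φ : p.obj e ⟶ b} {φ' : p.obj e ⟶ b'}
    (g : MapCat.mk e b φ ⟶ MapCat.mk e b' φ') (hg : g.f = 𝟙 e) :
    s.clv e φ ≫ s.s.map g = s.clv e φ' := by
  rw [clv, clv, Category.assoc, ← s.s.map_comp, clArrow_comp g hg]

theorem σ_comp_of_σ_map_postcomp {S : Cleavage p} (hcorr : ∀ (e : E) (b : B) (φ : p.obj e ⟶ b),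
      S.σ (s.clv e φ)) {e e' e'' : E} {f : e ⟶ e'} {g : e' ⟶ e''} (hf : S.σ f) (hg : S.σ g)
    (hpost : S.σ (s.s.map (MapCat.postcomp p e (p.map f) (p.map g)))) : S.σ (f ≫ g) := by
  obtain ⟨h₁, hf_eq⟩ := S.uniq (s.clv e (p.map f)) f _ (hcorr _ _ _) hf
    (s.p_map_clv_comp_eqToHom e (p.map f))
  obtain ⟨h₂, hg_eq⟩ := S.uniq _ (eqToHom h₁ ≫ g)
    (s.p_obj_obj (MapCat.mk e (p.obj e'') (p.map f ≫ p.map g))) hpost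
    (S.σ_eqToHom_comp h₁ hg) (by simp [p_map_map, MapCat.postcomp, eqToHom_map])
  have hfg : f ≫ g = s.clv e (p.map f ≫ p.map g) ≫ eqToHom h₂ := calc
    f ≫ g = s.clv e (p.map f) ≫ eqToHom h₁ ≫ g := by rw [← Category.assoc, hf_eq]
    _ = _ := by rw [← hg_eq, ← Category.assoc, s.clv_comp_map _ rfl]
  exact hfg ▸ S.σ_comp_eqToHom (hcorr _ _ _) h₂

end GoodMap

end DelHoyo

open CategoryTheory in
theorem DelHoyo.stmt5_general {E B : Type} [SmallCategory E] [SmallCategory B]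
    (p : E ⥤ B) (S : Cleavage p) (s : GoodMap p)
    (hcorr : ∀ (e : E) (b : B) (φ : p.obj e ⟶ b), S.σ (s.clv e φ)) :
    S.IsClosed ↔ ∀ ⦃X Y : MapCat p⦄ (g : X ⟶ Y), inSigmaU g → S.σ (s.s.map g) := by
  constructor
  · rintro hS ⟨e, b, φ⟩ ⟨e', b', φ'⟩ g ⟨he : e = e', hg⟩
    subst he
    refine hS.σ_of_σ_comp (hcorr e b φ) ?_
    rw [s.clv_comp_map g (by simpa using hg)]
    exact hcorr e b' φ'
  · intro hs e e' e'' f g hf hg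
    exact s.σ_comp_of_σ_map_postcomp hcorr hf hg (hs _ ⟨rfl, rfl⟩)

open CategoryTheory in
/-- a normal cleavage `Σ` is closed iff the corresponding good map `s` is very
good, i.e. carries the canonical closed cleavage `Σ^p` of `E^p` (arrows whose first
coordinate is an identity) into `Σ`. -/
theorem DelHoyo.stmt5 {E B : Type} [SmallCategory E] [SmallCategory B]
    (p : E ⥤ B) (hp : IsFibration p) (S : Cleavage p) (hS : S.IsNormal) (s : GoodMap p)
    (hcorr : ∀ (e : E) (b : B) (φ : p.obj e ⟶ b), S.σ (s.clv e φ)) :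
    S.IsClosed ↔ ∀ ⦃X Y : MapCat p⦄ (g : X ⟶ Y), inSigmaU g → S.σ (s.s.map g) :=
  DelHoyo.stmt5_general p S s hcorr
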